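/- Let P : C^op → InfSL be an m-variational existential doctrine (elementary, existential, comprehensive diagonals, full strong comprehension) with a strong predicate classifier: an object Ω with ∈ ∈ P(Ω) such that every φ ∈ P(A) is P(χ_φ)(∈) for a unique χ_φ : A → Ω. Then an arrow e : X → A of C is an epimorphism if and only if it is P-surjective (∃_e(⊤_X) = ⊤_A). -/
import Mathlib


open CategoryTheory CategoryTheory.Limits Opposite

noncomputable section

universe w v u

namespace DoctrinePaper

variable {C : Type u} [Category.{v} C] [HasFiniteProducts C]

/-- The fiber of a primary doctrine `P : Cᵒᵖ ⥤ SemilatInfCat` over an object `A`. -/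
abbrev Fib (P : Cᵒᵖ ⥤ SemilatInfCat.{w}) (A : C) : Type w :=
  ↥(P.obj (op A))

/-- Reindexing along an arrow `f : A ⟶ B`. -/
def rmap (P : Cᵒᵖ ⥤ SemilatInfCat.{w}) {A B : C} (f : A ⟶ B) :
    Fib P B → Fib P A :=
  fun x => (P.map f.op) x

variable (P : Cᵒᵖ ⥤ SemilatInfCat.{w})

/-- An elementary doctrine: fibered equalities `δ A ∈ P (A ⨯ A)` such that
`E_e(α) = P⟨pr1,pr2⟩(α) ⊓ P⟨pr2,pr3⟩(δ A)` is left adjoint to reindexing along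
`e = ⟨pr1,pr2,pr2⟩ : X ⨯ A ⟶ (X ⨯ A) ⨯ A`. -/
structure IsElementary where
  δ : ∀ A : C, Fib P (A ⨯ A)
  adj :
    ∀ (X A : C) (α : Fib P (X ⨯ A)) (β : Fib P ((X ⨯ A) ⨯ A)),
      (rmap P (prod.fst : (X ⨯ A) ⨯ A ⟶ X ⨯ A) α ⊓
          rmap P (prod.lift (prod.fst ≫ prod.snd) prod.snd : (X ⨯ A) ⨯ A ⟶ A ⨯ A) (δ A) ≤ β)
        ↔ α ≤ rmap P (prod.lift (𝟙 (X ⨯ A)) prod.snd : X ⨯ A ⟶ (X ⨯ A) ⨯ A) β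

/-- A `P`-equivalence relation over `A`. -/
structure IsEqRel (hE : IsElementary P) {A : C} (ρ : Fib P (A ⨯ A)) : Prop where
  refl : hE.δ A ≤ ρ
  symm : ρ = rmap P (prod.lift prod.snd prod.fst : A ⨯ A ⟶ A ⨯ A) ρ
  trans :
    rmap P (prod.fst : (A ⨯ A) ⨯ A ⟶ A ⨯ A) ρ ⊓
        rmap P (prod.lift (prod.fst ≫ prod.snd) prod.snd : (A ⨯ A) ⨯ A ⟶ A ⨯ A) ρ ≤
      rmap P (prod.lift (prod.fst ≫ prod.fst) prod.snd : (A ⨯ A) ⨯ A ⟶ A ⨯ A) ρ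

/-- An elementary existential doctrine, together with the induced left adjoints
`∃_f` along all arrows, satisfying the adjunction law, Frobenius reciprocity, and
the Beck–Chevalley condition along pullbacks of projections. -/
structure IsExistential extends IsElementary P where
  E : ∀ {A B : C}, (A ⟶ B) → Fib P A → Fib P B
  adjE : ∀ {A B : C} (f : A ⟶ B) (α : Fib P A) (β : Fib P B),
    E f α ≤ β ↔ α ≤ rmap P f β
  frobenius : ∀ {A B : C} (f : A ⟶ B) (α : Fib P A) (β : Fib P B),
    E f (α ⊓ rmap P f β) = E f α ⊓ β
  beckChevalley : ∀ {B A A' : C} (f : A' ⟶ A) (β : Fib P (B ⨯ A)),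
    E (prod.snd : B ⨯ A' ⟶ A') (rmap P (prod.map (𝟙 B) f) β) =
      rmap P f (E (prod.snd : B ⨯ A ⟶ A) β)

/-- Descent data for a relation `ρ` over `A`. -/
def Des {A : C} (ρ : Fib P (A ⨯ A)) : Set (Fib P A) :=
  {α | rmap P (prod.fst : A ⨯ A ⟶ A) α ⊓ ρ ≤ rmap P (prod.snd : A ⨯ A ⟶ A) α}

/-- Comprehensive diagonals: `f = g` iff `⊤ = P⟨f,g⟩(δ)`. -/
def ComprehensiveDiagonals (hE : IsElementary P) : Prop :=
  ∀ {X A : C} (f g : X ⟶ A), f = g ↔ rmap P (prod.lift f g) (hE.δ A) = ⊤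

/-- (Weak) comprehension structure. -/
structure Comprehension where
  cObj : ∀ {A : C}, Fib P A → C
  cArr : ∀ {A : C} (α : Fib P A), cObj α ⟶ A
  cTop : ∀ {A : C} (α : Fib P A), rmap P (cArr α) α = ⊤
  cUniv : ∀ {A : C} (α : Fib P A) {Y : C} (f : Y ⟶ A),
    rmap P f α = ⊤ → ∃ k : Y ⟶ cObj α, k ≫ cArr α = f

/-- Full comprehension. -/
def Comprehension.Full (hC : Comprehension P) : Prop :=
  ∀ {A : C} (α β : Fib P A), α ≤ β ↔ rmap P (hC.cArr α) β = ⊤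

/-- Strong comprehension: comprehension arrows are monic. -/
def Comprehension.Strong (hC : Comprehension P) : Prop :=
  ∀ {A : C} (α : Fib P A), Mono (hC.cArr α)

/-- `P`-injective arrow. -/
def PInj (hE : IsElementary P) {X A : C} (f : X ⟶ A) : Prop :=
  rmap P (prod.map f f) (hE.δ A) = hE.δ X

/-- `P`-surjective arrow. -/
def PSurj (hEx : IsExistential P) {X A : C} (f : X ⟶ A) : Prop :=
  hEx.E f (⊤ : Fib P X) = ⊤

/-- The product relation `ρ ⊠ σ` on `(A ⨯ B) ⨯ (A ⨯ B)`. -/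
def boxprod {A B : C} (ρ : Fib P (A ⨯ A)) (σ : Fib P (B ⨯ B)) :
    Fib P ((A ⨯ B) ⨯ (A ⨯ B)) :=
  rmap P (prod.map prod.fst prod.fst) ρ ⊓ rmap P (prod.map prod.snd prod.snd) σ

/-- A strong predicate classifier: an object `Ω` with `∈ ∈ P(Ω)` such that every
predicate has a unique classifying arrow. -/
structure StrongPredClassifier where
  Ω : C
  mem : Fib P Ω
  χ : ∀ {A : C}, Fib P A → (A ⟶ Ω)
  χ_spec : ∀ {A : C} (φ : Fib P A), rmap P (χ φ) mem = φ
  χ_unique : ∀ {A : C} (φ : Fib P A) (g : A ⟶ Ω), rmap P g mem = φ → g = χ φ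

lemma rmap_comp' {A B D : C} (f : A ⟶ B) (g : B ⟶ D) (x : Fib P D) :
    rmap P (f ≫ g) x = rmap P f (rmap P g x) := by
  simp only [rmap, op_comp, P.map_comp]; rfl

lemma rmap_top' {A B : C} (f : A ⟶ B) :
    rmap P f (⊤ : Fib P B) = ⊤ := by
  exact (P.map f.op).map_top'

/-- In an m-variational existential doctrine with a strong
predicate classifier, an arrow is an epimorphism iff it is `P`-surjective. -/
theorem epi_iff_PSurj
    (hP : IsExistential P) (hC : Comprehension P)
    (hfull : hC.Full P) (hstrong : hC.Strong P)
    (hcd : ComprehensiveDiagonals P hP.toIsElementary)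
    (S : StrongPredClassifier P)
    {X A : C} (e : X ⟶ A) :
    Epi e ↔ PSurj P hP e := by
  constructor
  · intro he
    have h1 : rmap P e (hP.E e ⊤) = ⊤ := by
      refine le_antisymm le_top ?_
      exact (hP.adjE e ⊤ (hP.E e ⊤)).mp le_rfl
    have h2 : e ≫ S.χ (hP.E e ⊤) = S.χ (⊤ : Fib P X) := by
      apply S.χ_unique
      rw [rmap_comp', S.χ_spec, h1]
    have h3 : e ≫ S.χ (⊤ : Fib P A) = S.χ (⊤ : Fib P X) := by
      apply S.χ_unique
      rw [rmap_comp', S.χ_spec, rmap_top']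
    have h4 : S.χ (hP.E e ⊤) = S.χ (⊤ : Fib P A) :=
      he.left_cancellation _ _ (h2.trans h3.symm)
    show hP.E e ⊤ = ⊤
    calc hP.E e ⊤ = rmap P (S.χ (hP.E e ⊤)) S.mem := (S.χ_spec _).symm
      _ = rmap P (S.χ (⊤ : Fib P A)) S.mem := by rw [h4]
      _ = ⊤ := S.χ_spec _
  · intro hs
    constructor
    intro B g h hgh
    rw [hcd]
    refine le_antisymm le_top ?_
    have : (⊤ : Fib P X) ≤ rmap P e (rmap P (prod.lift g h) (hP.δ B)) := by
      rw [← rmap_comp', prod.comp_lift, (hcd (e ≫ g) (e ≫ h)).mp hgh]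
    calc (⊤ : Fib P A) = hP.E e ⊤ := hs.symm
      _ ≤ rmap P (prod.lift g h) (hP.δ B) := (hP.adjE _ _ _).mpr this

end DoctrinePaper
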